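/- arXiv:2208.06502 — 5 statements merged into one kernel-verified Lean document; each statement's English description precedes it below -/
import Mathlib

section
/- Let L be a left-symmetric algebra whose associated Lie algebra g satisfies [g,g] = g. Then the right multiplication operator γ(x) (defined by γ(x)y = y·x) has trace 0 for every x ∈ g. -/
/-- If `L` is a left-symmetric algebra whose associated Lie algebra `g` satisfies
`[g,g] = g`, then the right multiplication operator `γ(x) : y ↦ y·x` has trace 0
for every `x`. -/
theorem lsa_trace_right_mul_eq_zero
    (K V : Type*) [Field K] [CharZero K] [AddCommGroup V] [Module K V]
    [FiniteDimensional K V]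
    (mul : V →ₗ[K] V →ₗ[K] V)
    (hlsa : ∀ x y z : V,
      mul (mul x y) z - mul x (mul y z) = mul (mul y x) z - mul y (mul x z))
    (hgen : Submodule.span K {z : V | ∃ x y : V, z = mul x y - mul y x} = ⊤) :
    ∀ x : V, LinearMap.trace K V (mul.flip x) = 0 := by
  -- ad x as an endomorphism
  set ad : V → Module.End K V := fun x => mul x - mul.flip x with had
  -- ρ([a,b]) = [ρ a, ρ b]
  have hρ : ∀ a b : V, mul (mul a b - mul b a) = mul a * mul b - mul b * mul a := by
    intro a b
    ext z
    have h := hlsa a b z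
    simp only [map_sub, LinearMap.sub_apply, Module.End.mul_apply]
    have : mul (mul a b) z - mul (mul b a) z = mul a (mul b z) - mul b (mul a z) := by
      linear_combination (norm := module) h
    exact this
  -- Jacobi : ad ([a,b]) = [ad a, ad b]
  have had : ∀ a b : V, ad (mul a b - mul b a) = ad a * ad b - ad b * ad a := by
    intro a b
    ext z
    simp only [had, LinearMap.sub_apply, Module.End.mul_apply, LinearMap.flip_apply,
      map_sub, LinearMap.sub_apply]
    linear_combination (norm := module) hlsa a b z + hlsa b z a + hlsa z a b
  intro x
  have hx : x ∈ Submodule.span K {z : V | ∃ x y : V, z = mul x y - mul y x} := by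
    rw [hgen]; trivial
  -- trace γ x = trace ρ x - trace ad x
  have key : ∀ x : V, LinearMap.trace K V (mul.flip x)
      = LinearMap.trace K V (mul x) - LinearMap.trace K V (ad x) := by
    intro x
    have h : ad x = mul x - mul.flip x := rfl
    rw [h, map_sub]; ring
  induction hx using Submodule.span_induction with
  | mem z hz =>
      obtain ⟨a, b, rfl⟩ := hz
      rw [key]
      rw [hρ, had]
      simp [LinearMap.trace_mul_comm]
  | zero => simp
  | add u v _ _ hu hv => rw [map_add, map_add, hu, hv, add_zero]
  | smul c u _ hu => rw [map_smul, map_smul, hu, smul_zero]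
end

section
/- Let L be a left-symmetric algebra whose associated Lie algebra g is simple (and finite-dimensional). Then there is no element e ∈ g with ρ(e) = id, i.e., no element e such that e·y = y for all y. -/
/-!
The left regular representation `ρ` of a left-symmetric algebra is a Lie algebra homomorphism
`g → gl(L)`, so its kernel is an ideal of the simple Lie algebra `g`. If `ρ(e) = id`, then
`ρ ≠ 0`, so `ρ` is injective; since `id` commutes with every `ρ(y)`, `ρ⁅e, y⁆ = 0` for all
`y`, hence `e` is central and thus zero, contradicting `ρ(e) = id ≠ 0`.
-/

attribute [local instance 100] LieRing.ofAssociativeRing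

namespace LieHom

variable {R L L' : Type*} [CommRing R] [LieRing L] [LieAlgebra R L] [LieRing L'] [LieAlgebra R L']

theorem injective_or_eq_zero [LieAlgebra.IsSimple R L] (f : L →ₗ⁅R⁆ L') :
    Function.Injective f ∨ f = 0 := by
  rcases LieAlgebra.IsSimple.eq_bot_or_eq_top f.ker with hbot | htop
  · exact Or.inl (ker_eq_bot f |>.mp hbot)
  · refine Or.inr (LieHom.ext fun x => ?_)
    exact mem_ker.mp (htop ▸ LieSubmodule.mem_top x)

theorem mem_center_of_injective {f : L →ₗ⁅R⁆ L'} (hf : Function.Injective f) {x : L}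
    (hx : ∀ y, ⁅f x, f y⁆ = 0) : x ∈ LieAlgebra.center R L := by
  rw [LieModule.mem_maxTrivSubmodule]
  intro y
  apply hf
  rw [map_lie, ← lie_skew, hx y, neg_zero, map_zero]

end LieHom

namespace LeftSymmetricAlgebra

variable {K L : Type*} [CommRing K] [LieRing L] [LieAlgebra K L]

def leftRegularRep (mul : L →ₗ[K] L →ₗ[K] L)
    (hlsa : ∀ x y z : L,
      mul (mul x y) z - mul x (mul y z) = mul (mul y x) z - mul y (mul x z))
    (hcompat : ∀ x y : L, mul x y - mul y x = ⁅x, y⁆) : L →ₗ⁅K⁆ Module.End K L where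
  toLinearMap := mul
  map_lie' {x y} := by
    ext z
    change mul ⁅x, y⁆ z = (mul x * mul y - mul y * mul x) z
    rw [← hcompat, map_sub]
    simp only [LinearMap.sub_apply, Module.End.mul_apply]
    exact sub_eq_sub_iff_sub_eq_sub.mp (hlsa x y z)

end LeftSymmetricAlgebra

open LeftSymmetricAlgebra in
theorem lsa_simple_no_left_identity_general
    (K L : Type*) [Field K] [LieRing L] [LieAlgebra K L]
    [LieAlgebra.IsSimple K L]
    (mul : L →ₗ[K] L →ₗ[K] L)
    (hlsa : ∀ x y z : L,
      mul (mul x y) z - mul x (mul y z) = mul (mul y x) z - mul y (mul x z))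
    (hcompat : ∀ x y : L, mul x y - mul y x = ⁅x, y⁆) :
    ¬ ∃ e : L, ∀ y : L, mul e y = y := by
  rintro ⟨e, he⟩
  set ρ := leftRegularRep mul hlsa hcompat
  have hρe : ρ e = 1 := LinearMap.ext he
  have : Nontrivial L := LieAlgebra.IsSimple.nontrivial K L
  have hρe_ne : ρ e ≠ 0 := hρe ▸ one_ne_zero
  have hinj : Function.Injective ρ :=
    ρ.injective_or_eq_zero.resolve_right fun h => hρe_ne (by rw [h, LieHom.zero_apply])
  have hcentral : e ∈ LieAlgebra.center K L :=
    LieHom.mem_center_of_injective hinj fun y => by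
      rw [hρe, Ring.lie_def, one_mul, mul_one, sub_self]
  rw [LieAlgebra.center_eq_bot, LieSubmodule.mem_bot] at hcentral
  exact hρe_ne (by rw [hcentral, map_zero])

/-- If `L` is a left-symmetric algebra whose associated Lie algebra `g` is simple and
finite dimensional, then there is no element `e` with `ρ(e) = id`, i.e. no `e` with
`e · y = y` for all `y`. -/
theorem lsa_simple_no_left_identity
    (K L : Type*) [Field K] [CharZero K] [LieRing L] [LieAlgebra K L]
    [FiniteDimensional K L] [LieAlgebra.IsSimple K L]
    (mul : L →ₗ[K] L →ₗ[K] L)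
    (hlsa : ∀ x y z : L,
      mul (mul x y) z - mul x (mul y z) = mul (mul y x) z - mul y (mul x z))
    (hcompat : ∀ x y : L, mul x y - mul y x = ⁅x, y⁆) :
    ¬ ∃ e : L, ∀ y : L, mul e y = y :=
  lsa_simple_no_left_identity_general K L mul hlsa hcompat
end

section
/- Let g be a Lie algebra, f: g → gl(V) a representation, and q: g → V a bijective linear map satisfying the 1-cocycle condition q([x,y]) = f(x)q(y) − f(y)q(x) for all x, y ∈ g. Then the product x·y := q⁻¹(f(x)q(y)) defines a left-symmetric algebra structure on g whose associated Lie bracket x·y − y·x coincides with the original bracket [x,y]. -/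
attribute [local instance 100] LieRing.ofAssociativeRing

/-! Transport the action through `q`: `q (x·y) = f x (q y)`. The cocycle identity says exactly
that `x·y − y·x = ⁅x, y⁆`, and after applying `q` left symmetry reads
`f (x·y − y·x) (q z) = f x (f y (q z)) − f y (f x (q z))`, which is `f` preserving brackets. -/

section CocycleMul

variable {K g V : Type*} [CommRing K] [LieRing g] [LieAlgebra K g] [AddCommGroup V] [Module K V]

def cocycleMul (f : g →ₗ⁅K⁆ Module.End K V) (q : g ≃ₗ[K] V) (x y : g) : g :=
  q.symm (f x (q y))

variable {f : g →ₗ⁅K⁆ Module.End K V} {q : g ≃ₗ[K] V}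

lemma apply_cocycleMul (x y : g) : q (cocycleMul f q x y) = f x (q y) :=
  q.apply_symm_apply _

lemma LieHom.map_lie_apply (x y : g) (v : V) :
    f ⁅x, y⁆ v = f x (f y v) - f y (f x v) := by
  rw [LieHom.map_lie, Ring.lie_def]
  rfl

lemma cocycleMul_sub_swap (hq : ∀ x y : g, q ⁅x, y⁆ = f x (q y) - f y (q x)) (x y : g) :
    cocycleMul f q x y - cocycleMul f q y x = ⁅x, y⁆ :=
  q.injective <| by rw [map_sub, apply_cocycleMul, apply_cocycleMul, hq]

lemma cocycleMul_leftSymmetric (hq : ∀ x y : g, q ⁅x, y⁆ = f x (q y) - f y (q x)) (x y z : g) :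
    cocycleMul f q (cocycleMul f q x y) z - cocycleMul f q x (cocycleMul f q y z)
      = cocycleMul f q (cocycleMul f q y x) z - cocycleMul f q y (cocycleMul f q x z) := by
  apply q.injective
  simp only [map_sub, apply_cocycleMul]
  rw [sub_eq_sub_iff_sub_eq_sub, ← LinearMap.sub_apply, ← map_sub, cocycleMul_sub_swap hq,
    LieHom.map_lie_apply]

end CocycleMul

/-- A bijective 1-cocycle `(f, q)` on a Lie algebra `g` yields a left-symmetric product
`x·y = q⁻¹(f(x)(q(y)))` whose commutator recovers the Lie bracket. -/
theorem bijective_one_cocycle_gives_lsa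
    (K g V : Type*) [Field K] [LieRing g] [LieAlgebra K g]
    [AddCommGroup V] [Module K V]
    (f : g →ₗ⁅K⁆ Module.End K V)
    (q : g ≃ₗ[K] V)
    (hq : ∀ x y : g, q ⁅x, y⁆ = f x (q y) - f y (q x)) :
    (∀ x y z : g,
      q.symm (f (q.symm (f x (q y))) (q (z))) - q.symm (f x (q (q.symm (f y (q z)))))
        = q.symm (f (q.symm (f y (q x))) (q z)) - q.symm (f y (q (q.symm (f x (q z))))))
    ∧ (∀ x y : g, q.symm (f x (q y)) - q.symm (f y (q x)) = ⁅x, y⁆) :=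
  ⟨cocycleMul_leftSymmetric hq, cocycleMul_sub_swap hq⟩
end

section
/- Fix m ≥ 1 and consider the linear system in variables a_{i,j} (1 ≤ i,j ≤ m+1), b_{j,s} (1 ≤ j ≤ m+1, 1 ≤ s ≤ m), c_{s,i} (1 ≤ s ≤ m, 1 ≤ i ≤ m+1), d_{s,t} (1 ≤ s,t ≤ m): a_{1,s+1} = 0 and a_{i+1,s+1} + d_{s,i} = 0 for 1 ≤ i,s ≤ m; a_{m+1,s} = 0 and a_{i,s} + d_{s,i} = 0 for 1 ≤ i,s ≤ m; b_{1,j} = 0, b_{m+1,j} = 0, b_{i+1,j} − b_{j+1,i} = 0 and b_{i,j} − b_{j,i} = 0 for 1 ≤ i ≠ j ≤ m; c_{s,s+1} = 0, c_{s,s} = 0, c_{s,t+1} + c_{t,s+1} = 0 and c_{s,t} + c_{t,s} = 0 for 1 ≤ s ≠ t ≤ m. Then every solution satisfies A = c·I_{m+1}, D = −c·I_m, B = 0, C = 0 for some scalar c. -/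
/-- The linear system computing the kernel of the evaluation map on `sl(m+1|m)`:
every solution is given by `A = c·I`, `D = -c·I`, `B = 0`, `C = 0` for a scalar `c`. -/
theorem sl_evaluation_kernel_system
    (K : Type*) [Field K] [CharZero K]
    (m : ℕ) (hm : 1 ≤ m)
    (a : Fin (m + 1) → Fin (m + 1) → K)
    (b : Fin (m + 1) → Fin m → K)
    (c : Fin m → Fin (m + 1) → K)
    (d : Fin m → Fin m → K)
    (h1 : ∀ s : Fin m, a 0 s.succ = 0)
    (h2 : ∀ i s : Fin m, a i.succ s.succ + d s i = 0)
    (h3 : ∀ s : Fin m, a (Fin.last m) s.castSucc = 0)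
    (h4 : ∀ i s : Fin m, a i.castSucc s.castSucc + d s i = 0)
    (h5 : ∀ j : Fin m, b 0 j = 0)
    (h6 : ∀ i j : Fin m, i ≠ j → b i.succ j - b j.succ i = 0)
    (h7 : ∀ j : Fin m, b (Fin.last m) j = 0)
    (h8 : ∀ i j : Fin m, i ≠ j → b i.castSucc j - b j.castSucc i = 0)
    (h9 : ∀ s : Fin m, c s s.succ = 0)
    (h10 : ∀ s t : Fin m, s ≠ t → c s t.succ + c t s.succ = 0)
    (h11 : ∀ s : Fin m, c s s.castSucc = 0)
    (h12 : ∀ s t : Fin m, s ≠ t → c s t.castSucc + c t s.castSucc = 0) :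
    ∃ cst : K,
      (∀ i j : Fin (m + 1), a i j = if i = j then cst else 0) ∧
      (∀ s t : Fin m, d s t = if s = t then -cst else 0) ∧
      (∀ (j : Fin (m + 1)) (s : Fin m), b j s = 0) ∧
      (∀ (s : Fin m) (i : Fin (m + 1)), c s i = 0) := by
  -- helper: congruence for `a` on values
  have aext : ∀ (i i' j j' : Fin (m+1)), (i:ℕ) = i' → (j:ℕ) = j' → a i j = a i' j' := by
    intro i i' j j' e1 e2
    rw [Fin.ext e1, Fin.ext e2]
  have bext : ∀ (i i' : Fin (m+1)) (j j' : Fin m), (i:ℕ) = i' → (j:ℕ) = j' → b i j = b i' j' := by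
    intro i i' j j' e1 e2
    rw [Fin.ext e1, Fin.ext e2]
  have cext : ∀ (s s' : Fin m) (i i' : Fin (m+1)), (s:ℕ) = s' → (i:ℕ) = i' → c s i = c s' i' := by
    intro s s' i i' e1 e2
    rw [Fin.ext e1, Fin.ext e2]
  ------------------------------------------------------------------
  -- b ≡ 0, by induction on the row
  ------------------------------------------------------------------
  have hb : ∀ n : ℕ, n ≤ m → ∀ (h : n < m + 1) (j : Fin m), b ⟨n, h⟩ j = 0 := by
    intro n
    induction n with
    | zero => intro _ h j; exact h5 j
    | succ n ih =>
      intro hn h j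
      have hnm : n < m := hn
      have ihn := ih (by omega) (by omega)
      by_cases hj : (j : ℕ) = n
      · by_cases hnm1 : n + 1 = m
        · have e : (⟨n+1, h⟩ : Fin (m+1)) = Fin.last m := Fin.ext (by simp [hnm1])
          rw [e]; exact h7 j
        · have hlt : n + 1 < m := by omega
          have e8 := h8 ⟨n+1, hlt⟩ ⟨n, hnm⟩ (by simp [Fin.ext_iff])
          simp only [Fin.castSucc_mk] at e8
          have hj' : j = ⟨n, hnm⟩ := Fin.ext hj
          rw [hj']
          exact (sub_eq_zero.mp e8).trans (ihn ⟨n+1, hlt⟩)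
      · have e6 := h6 ⟨n, hnm⟩ j (by simp [Fin.ext_iff]; omega)
        simp only [Fin.succ_mk] at e6
        have egoal : b ⟨n+1, h⟩ j = b j.succ ⟨n, hnm⟩ := sub_eq_zero.mp e6
        rw [egoal]
        by_cases hjm : (j : ℕ) + 1 = m
        · have e : j.succ = Fin.last m := Fin.ext (by simp [hjm])
          rw [e]; exact h7 ⟨n, hnm⟩
        · have hjm' : (j : ℕ) + 1 < m := by omega
          by_cases hjn : (j : ℕ) + 1 = n
          · have e : j.succ = (⟨n, by omega⟩ : Fin (m+1)) := Fin.ext (by simp [hjn])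
            rw [e]; exact ihn ⟨n, hnm⟩
          · have e8 := h8 ⟨(j:ℕ)+1, hjm'⟩ ⟨n, hnm⟩ (by simp [Fin.ext_iff]; omega)
            simp only [Fin.castSucc_mk] at e8
            have e : j.succ = (⟨(j:ℕ)+1, by omega⟩ : Fin (m+1)) := Fin.ext (by simp)
            rw [e]
            exact (sub_eq_zero.mp e8).trans (ihn ⟨(j:ℕ)+1, hjm'⟩)
  have hbfin : ∀ (j : Fin (m + 1)) (s : Fin m), b j s = 0 := by
    intro j s
    have := hb (j : ℕ) (by omega) j.isLt s
    rwa [Fin.eta] at this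
  ------------------------------------------------------------------
  -- c ≡ 0, by strong induction on |i - s|
  ------------------------------------------------------------------
  have hcaux : ∀ n : ℕ, ∀ (s : Fin m) (i : Fin (m+1)),
      ((i:ℕ) = (s:ℕ) + n ∨ (s:ℕ) = (i:ℕ) + n) → c s i = 0 := by
    intro n
    induction n using Nat.strong_induction_on with
    | _ n ih =>
      intro s i hsi
      by_cases h0 : n = 0
      · subst h0
        have e : i = s.castSucc := Fin.ext (by simp [Fin.coe_castSucc]; omega)
        rw [e]; exact h11 s
      rcases hsi with hcase | hcase
      · -- i = s + n,  n ≥ 1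
        have ht : (i:ℕ) - 1 < m := by omega
        set t : Fin m := ⟨(i:ℕ) - 1, ht⟩ with htdef
        have hit : i = t.succ := Fin.ext (by simp [t]; omega)
        by_cases h1' : n = 1
        · have e : t = s := Fin.ext (by simp [t]; omega)
          rw [hit, e]; exact h9 s
        · have e := h10 s t (by simp [Fin.ext_iff, t]; omega)
          have hz : c t s.succ = 0 :=
            ih (n-2) (by omega) t s.succ (Or.inr (by simp [t, Fin.val_succ]; omega))
          rw [hit]; linear_combination e - hz
      · -- s = i + n,  n ≥ 1
        have him : (i:ℕ) < m := by omega
        set it : Fin m := ⟨(i:ℕ), him⟩ with hitdef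
        have hii : i = it.castSucc := Fin.ext (by simp [it])
        have e12 := h12 s it (by simp [Fin.ext_iff, it]; omega)
        have hz : c it s.castSucc = 0 := by
          by_cases h1' : n = 1
          · have e : s.castSucc = it.succ := Fin.ext (by simp [it]; omega)
            rw [e]; exact h9 it
          · have hts : (s:ℕ) - 1 < m := by omega
            set t : Fin m := ⟨(s:ℕ) - 1, hts⟩ with htdef
            have hsc : s.castSucc = t.succ := Fin.ext (by simp [t]; omega)
            have e := h10 it t (by simp [Fin.ext_iff, it, t]; omega)
            have h' : c t it.succ = 0 :=
              ih (n-2) (by omega) t it.succ (Or.inr (by simp [t, it, Fin.val_succ]; omega))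
            rw [hsc]; linear_combination e - h'
        rw [hii]; linear_combination e12 - hz
  have hcfin : ∀ (s : Fin m) (i : Fin (m + 1)), c s i = 0 := by
    intro s i
    rcases le_or_gt (s:ℕ) (i:ℕ) with h | h
    · exact hcaux ((i:ℕ) - (s:ℕ)) s i (Or.inl (by omega))
    · exact hcaux ((s:ℕ) - (i:ℕ)) s i (Or.inr (by omega))
  ------------------------------------------------------------------
  -- the diagonal shift for a
  ------------------------------------------------------------------
  have ash : ∀ i j : Fin m, a i.castSucc j.castSucc = a i.succ j.succ := by
    intro i j
    have g2 := h2 i j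
    have g4 := h4 i j
    linear_combination g4 - g2
  have ashn : ∀ k i j : ℕ, (hi : i + k ≤ m) → (hj : j + k ≤ m) →
      a ⟨i, by omega⟩ ⟨j, by omega⟩ = a ⟨i + k, by omega⟩ ⟨j + k, by omega⟩ := by
    intro k
    induction k with
    | zero => intro i j hi hj; exact aext _ _ _ _ rfl rfl
    | succ k ihk =>
      intro i j hi hj
      have step : a (⟨i, by omega⟩ : Fin (m+1)) ⟨j, by omega⟩
          = a ⟨i+1, by omega⟩ ⟨j+1, by omega⟩ := by
        have := ash ⟨i, by omega⟩ ⟨j, by omega⟩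
        simpa only [Fin.castSucc_mk, Fin.succ_mk] using this
      rw [step, ihk (i+1) (j+1) (by omega) (by omega)]
      exact aext _ _ _ _ (by simp <;> omega) (by simp <;> omega)
  ------------------------------------------------------------------
  have ha : ∀ i j : Fin (m+1), a i j = if i = j then a 0 0 else 0 := by
      intro i j
      rcases lt_trichotomy (i:ℕ) (j:ℕ) with hlt | heq | hgt
      · rw [if_neg (by simp [Fin.ext_iff]; omega)]
        have e := ashn (i:ℕ) 0 ((j:ℕ) - (i:ℕ)) (by omega) (by omega)
        have e2 : a i j = a ⟨0, by omega⟩ ⟨(j:ℕ) - (i:ℕ), by omega⟩ := by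
          rw [e]; exact aext _ _ _ _ (by simp <;> omega) (by simp <;> omega)
        rw [e2]
        have := h1 ⟨(j:ℕ) - (i:ℕ) - 1, by omega⟩
        have e3 : ((⟨(j:ℕ) - (i:ℕ) - 1, by omega⟩ : Fin m)).succ
            = (⟨(j:ℕ) - (i:ℕ), by omega⟩ : Fin (m+1)) := Fin.ext (by simp; omega)
        rw [e3] at this
        have e0 : (0 : Fin (m+1)) = ⟨0, by omega⟩ := rfl
        rw [e0] at this
        exact this
      · rw [if_pos (Fin.ext heq)]
        have e := ashn (i:ℕ) 0 0 (by omega) (by omega)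
        have e2 : a i j = a ⟨0 + (i:ℕ), by omega⟩ ⟨0 + (i:ℕ), by omega⟩ :=
          aext _ _ _ _ (by simp <;> omega) (by simp <;> omega)
        rw [e2, ← e]
        exact aext _ _ _ _ rfl rfl
      · rw [if_neg (by simp [Fin.ext_iff]; omega)]
        have e := ashn (m - (i:ℕ)) (i:ℕ) (j:ℕ) (by omega) (by omega)
        have e2 : a i j = a ⟨(i:ℕ), by omega⟩ ⟨(j:ℕ), by omega⟩ :=
          aext _ _ _ _ rfl rfl
        rw [e2, e]
        have := h3 ⟨(j:ℕ) + (m - (i:ℕ)), by omega⟩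
        have e3 : ((⟨(j:ℕ) + (m - (i:ℕ)), by omega⟩ : Fin m)).castSucc
            = (⟨(j:ℕ) + (m - (i:ℕ)), by omega⟩ : Fin (m+1)) := Fin.ext (by simp)
        have e4 : Fin.last m = (⟨(i:ℕ) + (m - (i:ℕ)), by omega⟩ : Fin (m+1)) :=
          Fin.ext (by simp; omega)
        rw [e3, e4] at this
        exact this
  refine ⟨a 0 0, ha, ?_, hbfin, hcfin⟩
  -- d is -scalar
  intro s t
  have g2 := h2 t s
  rw [ha] at g2
  by_cases hst : s = t
  · subst hst
    rw [if_pos rfl] at g2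
    rw [if_pos rfl]
    linear_combination g2
  · have hne : t.succ ≠ s.succ := fun hc => hst (Fin.succ_injective _ hc).symm
    rw [if_neg hne] at g2
    rw [if_neg hst]
    linear_combination g2
end

section
/- Let g be a finite-dimensional Lie superalgebra of superdimension p|q with [g,g] = g, equipped with a left-symmetric superalgebra structure inducing its bracket. If there exists e ∈ g with ρ(e) = id (where ρ(x)y = x·y) or γ(e) = id (where γ(x)y = (−1)^{|x||y|}y·x), then p = q. -/
open Module

/-- `x ∈ L₀ × L₁` is homogeneous of parity `ε` (`false` = even, `true` = odd). -/
def SuperHom {L₀ L₁ : Type*} [AddCommGroup L₀] [AddCommGroup L₁]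
    (x : L₀ × L₁) (ε : Bool) : Prop :=
  if ε then x.1 = 0 else x.2 = 0

/-- The sign `(-1)^{|x||y|}` for parities `a`, `b`. -/
def superSign (K : Type*) [Field K] (a b : Bool) : K :=
  if a && b then -1 else 1



section STraceAux
set_option linter.unusedSectionVars false

variable {K L₀ L₁ : Type*} [Field K]
  [AddCommGroup L₀] [Module K L₀] [FiniteDimensional K L₀]
  [AddCommGroup L₁] [Module K L₁] [FiniteDimensional K L₁]

/-- blocks of an endomorphism of `L₀ × L₁` -/
def sblk00 (f : (L₀ × L₁) →ₗ[K] (L₀ × L₁)) : L₀ →ₗ[K] L₀ :=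
  LinearMap.fst K L₀ L₁ ∘ₗ f ∘ₗ LinearMap.inl K L₀ L₁
def sblk01 (f : (L₀ × L₁) →ₗ[K] (L₀ × L₁)) : L₁ →ₗ[K] L₀ :=
  LinearMap.fst K L₀ L₁ ∘ₗ f ∘ₗ LinearMap.inr K L₀ L₁
def sblk10 (f : (L₀ × L₁) →ₗ[K] (L₀ × L₁)) : L₀ →ₗ[K] L₁ :=
  LinearMap.snd K L₀ L₁ ∘ₗ f ∘ₗ LinearMap.inl K L₀ L₁
def sblk11 (f : (L₀ × L₁) →ₗ[K] (L₀ × L₁)) : L₁ →ₗ[K] L₁ :=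
  LinearMap.snd K L₀ L₁ ∘ₗ f ∘ₗ LinearMap.inr K L₀ L₁

@[simp] lemma sblk00_apply (f : (L₀ × L₁) →ₗ[K] (L₀ × L₁)) (y : L₀) :
    sblk00 f y = (f (y, 0)).1 := rfl
@[simp] lemma sblk01_apply (f : (L₀ × L₁) →ₗ[K] (L₀ × L₁)) (y : L₁) :
    sblk01 f y = (f (0, y)).1 := rfl
@[simp] lemma sblk10_apply (f : (L₀ × L₁) →ₗ[K] (L₀ × L₁)) (y : L₀) :
    sblk10 f y = (f (y, 0)).2 := rfl
@[simp] lemma sblk11_apply (f : (L₀ × L₁) →ₗ[K] (L₀ × L₁)) (y : L₁) :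
    sblk11 f y = (f (0, y)).2 := rfl

lemma sprod_split (pt : L₀ × L₁) : pt = (pt.1, (0 : L₁)) + ((0 : L₀), pt.2) := by
  ext <;> simp

lemma sblk00_comp (f g : (L₀ × L₁) →ₗ[K] (L₀ × L₁)) :
    sblk00 (f ∘ₗ g) = sblk00 f ∘ₗ sblk00 g + sblk01 f ∘ₗ sblk10 g := by
  ext y
  simp only [LinearMap.comp_apply, LinearMap.add_apply, sblk00_apply, sblk01_apply,
    sblk10_apply]
  conv_lhs => rw [sprod_split (g (y, 0))]
  rw [map_add, Prod.fst_add]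

lemma sblk11_comp (f g : (L₀ × L₁) →ₗ[K] (L₀ × L₁)) :
    sblk11 (f ∘ₗ g) = sblk11 f ∘ₗ sblk11 g + sblk10 f ∘ₗ sblk01 g := by
  ext y
  simp only [LinearMap.comp_apply, LinearMap.add_apply, sblk11_apply, sblk10_apply,
    sblk01_apply]
  conv_lhs => rw [sprod_split (g (0, y))]
  rw [map_add, Prod.snd_add, add_comm]

lemma sblk00_add (f g : (L₀ × L₁) →ₗ[K] (L₀ × L₁)) :
    sblk00 (f + g) = sblk00 f + sblk00 g := by ext y; simp
lemma sblk11_add (f g : (L₀ × L₁) →ₗ[K] (L₀ × L₁)) :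
    sblk11 (f + g) = sblk11 f + sblk11 g := by ext y; simp
lemma sblk00_sub (f g : (L₀ × L₁) →ₗ[K] (L₀ × L₁)) :
    sblk00 (f - g) = sblk00 f - sblk00 g := by ext y; simp
lemma sblk11_sub (f g : (L₀ × L₁) →ₗ[K] (L₀ × L₁)) :
    sblk11 (f - g) = sblk11 f - sblk11 g := by ext y; simp
lemma sblk00_smul (c : K) (f : (L₀ × L₁) →ₗ[K] (L₀ × L₁)) :
    sblk00 (c • f) = c • sblk00 f := by ext y; simp
lemma sblk11_smul (c : K) (f : (L₀ × L₁) →ₗ[K] (L₀ × L₁)) :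
    sblk11 (c • f) = c • sblk11 f := by ext y; simp
lemma sblk00_zero : sblk00 (0 : (L₀ × L₁) →ₗ[K] (L₀ × L₁)) = 0 := by ext y; simp
lemma sblk11_zero : sblk11 (0 : (L₀ × L₁) →ₗ[K] (L₀ × L₁)) = 0 := by ext y; simp
lemma sblk00_id : sblk00 (LinearMap.id : (L₀ × L₁) →ₗ[K] (L₀ × L₁)) = LinearMap.id := by
  ext y; simp
lemma sblk11_id : sblk11 (LinearMap.id : (L₀ × L₁) →ₗ[K] (L₀ × L₁)) = LinearMap.id := by
  ext y; simp

/-- the supertrace -/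
noncomputable def strace (f : (L₀ × L₁) →ₗ[K] (L₀ × L₁)) : K :=
  LinearMap.trace K L₀ (sblk00 f) - LinearMap.trace K L₁ (sblk11 f)

lemma strace_add (f g : (L₀ × L₁) →ₗ[K] (L₀ × L₁)) :
    strace (f + g) = strace f + strace g := by
  simp only [strace, sblk00_add, sblk11_add, map_add]; ring

lemma strace_sub (f g : (L₀ × L₁) →ₗ[K] (L₀ × L₁)) :
    strace (f - g) = strace f - strace g := by
  simp only [strace, sblk00_sub, sblk11_sub, map_sub]; ring

lemma strace_smul (c : K) (f : (L₀ × L₁) →ₗ[K] (L₀ × L₁)) :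
    strace (c • f) = c * strace f := by
  simp only [strace, sblk00_smul, sblk11_smul, map_smul, smul_eq_mul]; ring

lemma strace_zero : strace (0 : (L₀ × L₁) →ₗ[K] (L₀ × L₁)) = 0 := by
  simp [strace, sblk00_zero, sblk11_zero]

lemma strace_id :
    strace (LinearMap.id : (L₀ × L₁) →ₗ[K] (L₀ × L₁))
      = (finrank K L₀ : K) - finrank K L₁ := by
  simp [strace, sblk00_id, sblk11_id, LinearMap.trace_id]

/-- supertrace of a commutator of two even operators vanishes -/
lemma strace_comm_even (A B : (L₀ × L₁) →ₗ[K] (L₀ × L₁))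
    (hA01 : sblk01 A = 0) (hA10 : sblk10 A = 0)
    (hB01 : sblk01 B = 0) (hB10 : sblk10 B = 0) :
    strace (A ∘ₗ B - B ∘ₗ A) = 0 := by
  simp only [strace, sblk00_sub, sblk11_sub, sblk00_comp, sblk11_comp, hA01, hA10,
    hB01, hB10, LinearMap.zero_comp, LinearMap.comp_zero, add_zero, map_sub]
  rw [LinearMap.trace_comp_comm' (sblk00 B) (sblk00 A),
    LinearMap.trace_comp_comm' (sblk11 B) (sblk11 A)]
  ring

/-- supertrace of a product of an even and odd operator vanishes -/
lemma strace_comp_even_odd (A B : (L₀ × L₁) →ₗ[K] (L₀ × L₁))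
    (hA01 : sblk01 A = 0) (hA10 : sblk10 A = 0)
    (hB00 : sblk00 B = 0) (hB11 : sblk11 B = 0) :
    strace (A ∘ₗ B) = 0 := by
  simp [strace, sblk00_comp, sblk11_comp, hA01, hA10, hB00, hB11]

lemma strace_comp_odd_even (A B : (L₀ × L₁) →ₗ[K] (L₀ × L₁))
    (hA00 : sblk00 A = 0) (hA11 : sblk11 A = 0)
    (hB01 : sblk01 B = 0) (hB10 : sblk10 B = 0) :
    strace (A ∘ₗ B) = 0 := by
  simp [strace, sblk00_comp, sblk11_comp, hA00, hA11, hB01, hB10]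

/-- supertrace of the anticommutator of two odd operators vanishes -/
lemma strace_anticomm_odd (A B : (L₀ × L₁) →ₗ[K] (L₀ × L₁))
    (hA00 : sblk00 A = 0) (hA11 : sblk11 A = 0)
    (hB00 : sblk00 B = 0) (hB11 : sblk11 B = 0) :
    strace (A ∘ₗ B) + strace (B ∘ₗ A) = 0 := by
  simp only [strace, sblk00_comp, sblk11_comp, hA00, hA11, hB00, hB11,
    LinearMap.zero_comp, LinearMap.comp_zero, zero_add, add_zero]
  rw [LinearMap.trace_comp_comm' (sblk10 B) (sblk01 A),
    LinearMap.trace_comp_comm' (sblk10 A) (sblk01 B)]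
  ring

/-- full (non-super) trace of a commutator of two odd operators vanishes -/
lemma trsum_comm_odd (A B : (L₀ × L₁) →ₗ[K] (L₀ × L₁))
    (hA00 : sblk00 A = 0) (hA11 : sblk11 A = 0)
    (hB00 : sblk00 B = 0) (hB11 : sblk11 B = 0) :
    LinearMap.trace K L₀ (sblk00 (A ∘ₗ B - B ∘ₗ A))
      + LinearMap.trace K L₁ (sblk11 (A ∘ₗ B - B ∘ₗ A)) = 0 := by
  simp only [sblk00_sub, sblk11_sub, sblk00_comp, sblk11_comp, hA00, hA11, hB00, hB11,
    LinearMap.zero_comp, LinearMap.comp_zero, zero_add, add_zero, map_sub]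
  rw [LinearMap.trace_comp_comm' (sblk10 B) (sblk01 A),
    LinearMap.trace_comp_comm' (sblk10 A) (sblk01 B)]
  ring

/-- the parity/sign operator -/
def sgnOp : (L₀ × L₁) →ₗ[K] (L₀ × L₁) :=
  LinearMap.prodMap LinearMap.id (-LinearMap.id)

@[simp] lemma sgnOp_apply (pt : L₀ × L₁) : (sgnOp (K := K) pt) = (pt.1, -pt.2) := rfl

lemma strace_comp_sgnOp (C : (L₀ × L₁) →ₗ[K] (L₀ × L₁)) :
    strace (C ∘ₗ sgnOp)
      = LinearMap.trace K L₀ (sblk00 C) + LinearMap.trace K L₁ (sblk11 C) := by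
  have h0 : sblk00 (C ∘ₗ sgnOp) = sblk00 C := by
    ext y; simp
  have h1 : sblk11 (C ∘ₗ sgnOp) = -sblk11 C := by
    ext y
    simp only [sblk11_apply, LinearMap.comp_apply, sgnOp_apply, LinearMap.neg_apply]
    rw [show ((0 : L₀), -y) = -((0 : L₀), y) by ext <;> simp]
    rw [map_neg, Prod.snd_neg]
  simp only [strace, h0, h1, map_neg]
  ring

end STraceAux


set_option maxHeartbeats 1000000 in
/-- If a finite-dimensional Lie superalgebra `g` of superdimension `p|q` with
`[g,g] = g` carries a left-symmetric superalgebra structure inducing its bracket,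
and there is `e` with `ρ(e) = id` or `γ(e) = id`, then `p = q`. -/
theorem lssa_identity_forces_equal_dimensions
    (K L₀ L₁ : Type*) [Field K] [CharZero K]
    [AddCommGroup L₀] [Module K L₀] [FiniteDimensional K L₀]
    [AddCommGroup L₁] [Module K L₁] [FiniteDimensional K L₁]
    (p q : ℕ) (hp : finrank K L₀ = p) (hq : finrank K L₁ = q)
    (mul : (L₀ × L₁) →ₗ[K] (L₀ × L₁) →ₗ[K] (L₀ × L₁))
    -- the product respects the ℤ₂-grading
    (hg₀₀ : ∀ x y : L₀, (mul (x, 0) (y, 0)).2 = 0)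
    (hg₀₁ : ∀ (x : L₀) (y : L₁), (mul (x, 0) (0, y)).1 = 0)
    (hg₁₀ : ∀ (x : L₁) (y : L₀), (mul (0, x) (y, 0)).1 = 0)
    (hg₁₁ : ∀ x y : L₁, (mul (0, x) (0, y)).2 = 0)
    -- the left-symmetric superalgebra identity on homogeneous elements
    (hlsa : ∀ (x y : L₀ × L₁) (εx εy : Bool), SuperHom x εx → SuperHom y εy →
      ∀ z : L₀ × L₁,
        mul (mul x y) z - mul x (mul y z)
          = superSign K εx εy • (mul (mul y x) z - mul y (mul x z)))
    -- the associated bracket `[x,y] = x·y - (-1)^{|x||y|} y·x` satisfies `[g,g] = g`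
    (hgen : Submodule.span K {z : L₀ × L₁ | ∃ (x y : L₀ × L₁) (εx εy : Bool),
        SuperHom x εx ∧ SuperHom y εy ∧
        z = mul x y - superSign K εx εy • mul y x} = ⊤)
    -- there is `e` with `ρ(e) = id` or with `γ(e) = id`, where
    -- `γ(e) y = (-1)^{|e||y|} y·e` (written out on the graded components)
    (he : (∃ e : L₀ × L₁, ∀ y : L₀ × L₁, mul e y = y) ∨
          (∃ e : L₀ × L₁, ∀ y : L₀ × L₁,
            mul y ((e.1, 0) : L₀ × L₁) + mul ((y.1, 0) : L₀ × L₁) ((0, e.2) : L₀ × L₁)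
              - mul ((0, y.2) : L₀ × L₁) ((0, e.2) : L₀ × L₁) = y)) :
    p = q := by
  -- sign values
  have hsff : superSign K false false = 1 := by simp [superSign]
  have hsft : superSign K false true = 1 := by simp [superSign]
  have hstf : superSign K true false = 1 := by simp [superSign]
  have hstt : superSign K true true = -1 := by simp [superSign]
  -- parity of left/right multiplications
  have Lev01 : ∀ a : L₀, sblk01 (mul (a, 0)) = 0 := by
    intro a; ext y; simpa using hg₀₁ a y
  have Lev10 : ∀ a : L₀, sblk10 (mul (a, 0)) = 0 := by
    intro a; ext y; simpa using hg₀₀ a y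
  have Lod00 : ∀ a : L₁, sblk00 (mul (0, a)) = 0 := by
    intro a; ext y; simpa using hg₁₀ a y
  have Lod11 : ∀ a : L₁, sblk11 (mul (0, a)) = 0 := by
    intro a; ext y; simpa using hg₁₁ a y
  have Rev01 : ∀ a : L₀, sblk01 (mul.flip (a, 0)) = 0 := by
    intro a; ext y; simpa using hg₁₀ y a
  have Rev10 : ∀ a : L₀, sblk10 (mul.flip (a, 0)) = 0 := by
    intro a; ext y; simpa using hg₀₀ y a
  have Rod00 : ∀ a : L₁, sblk00 (mul.flip (0, a)) = 0 := by
    intro a; ext y; simpa using hg₀₁ y a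
  have Rod11 : ∀ a : L₁, sblk11 (mul.flip (0, a)) = 0 := by
    intro a; ext y; simpa using hg₁₁ y a
  -- vanishing of both supertraces on generators
  have gen : ∀ z ∈ {z : L₀ × L₁ | ∃ (x y : L₀ × L₁) (εx εy : Bool),
      SuperHom x εx ∧ SuperHom y εy ∧
      z = mul x y - superSign K εx εy • mul y x},
      strace (mul z) = 0 ∧ strace (mul.flip (z.1, (0 : L₁))) = 0 := by
    rintro z ⟨x, y, εx, εy, hx, hy, rfl⟩
    obtain ⟨a1, a2⟩ := x
    obtain ⟨b1, b2⟩ := y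
    cases εx <;> cases εy <;> simp only [SuperHom, if_true, if_false] at hx hy
    · -- even, even
      subst hx; subst hy
      rw [hsff, one_smul]
      constructor
      · have hA : mul (mul (a1, 0) (b1, 0) - mul (b1, 0) (a1, 0))
            = mul (a1, (0:L₁)) ∘ₗ mul (b1, 0) - mul (b1, 0) ∘ₗ mul (a1, 0) := by
          refine LinearMap.ext fun w => ?_
          have h := hlsa (a1, 0) (b1, 0) false false (by simp [SuperHom])
            (by simp [SuperHom]) w
          rw [hsff, one_smul] at h
          simp only [map_sub, LinearMap.sub_apply, LinearMap.comp_apply]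
          linear_combination (norm := abel) h
        rw [hA]
        exact strace_comm_even _ _ (Lev01 a1) (Lev10 a1) (Lev01 b1) (Lev10 b1)
      · have hz : ((mul (a1, (0:L₁)) (b1, 0) - mul (b1, 0) (a1, 0)).1, (0 : L₁))
            = mul (a1, (0:L₁)) (b1, 0) - mul (b1, 0) (a1, 0) := by
          ext <;> simp [hg₀₀]
        rw [hz]
        have hB : mul.flip (mul (a1, (0:L₁)) (b1, 0) - mul (b1, 0) (a1, 0))
            = (mul.flip (b1, 0) ∘ₗ mul.flip (a1, 0) - mul.flip (a1, 0) ∘ₗ mul.flip (b1, 0))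
              - (mul.flip (b1, 0) ∘ₗ mul (a1, 0) - mul (a1, 0) ∘ₗ mul.flip (b1, 0))
              + (mul.flip (a1, 0) ∘ₗ mul (b1, 0) - mul (b1, 0) ∘ₗ mul.flip (a1, 0)) := by
          refine LinearMap.ext fun pt => ?_
          obtain ⟨p0, p1⟩ := pt
          have h0x := hlsa (p0, 0) (a1, 0) false false (by simp [SuperHom])
            (by simp [SuperHom]) (b1, 0)
          have h1x := hlsa (0, p1) (a1, 0) true false (by simp [SuperHom])
            (by simp [SuperHom]) (b1, 0)
          have h0y := hlsa (p0, 0) (b1, 0) false false (by simp [SuperHom])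
            (by simp [SuperHom]) (a1, 0)
          have h1y := hlsa (0, p1) (b1, 0) true false (by simp [SuperHom])
            (by simp [SuperHom]) (a1, 0)
          rw [hsff, one_smul] at h0x h0y
          rw [hstf, one_smul] at h1x h1y
          simp only [LinearMap.flip_apply, map_sub, LinearMap.sub_apply,
            LinearMap.add_apply, LinearMap.comp_apply]
          rw [show ((p0, p1) : L₀ × L₁) = (p0, (0:L₁)) + ((0:L₀), p1) by ext <;> simp]
          simp only [map_add, LinearMap.add_apply]
          linear_combination (norm := abel) -h0x - h1x + h0y + h1y
        rw [hB, strace_add, strace_sub]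
        rw [strace_comm_even _ _ (Rev01 b1) (Rev10 b1) (Rev01 a1) (Rev10 a1),
          strace_comm_even _ _ (Rev01 b1) (Rev10 b1) (Lev01 a1) (Lev10 a1),
          strace_comm_even _ _ (Rev01 a1) (Rev10 a1) (Lev01 b1) (Lev10 b1)]
        ring
    · -- even, odd
      subst hx; subst hy
      rw [hsft, one_smul]
      constructor
      · have hA : mul (mul (a1, (0:L₁)) ((0:L₀), b2) - mul (0, b2) (a1, 0))
            = mul (a1, (0:L₁)) ∘ₗ mul ((0:L₀), b2) - mul ((0:L₀), b2) ∘ₗ mul (a1, 0) := by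
          refine LinearMap.ext fun w => ?_
          have h := hlsa (a1, 0) (0, b2) false true (by simp [SuperHom])
            (by simp [SuperHom]) w
          rw [hsft, one_smul] at h
          simp only [map_sub, LinearMap.sub_apply, LinearMap.comp_apply]
          linear_combination (norm := abel) h
        rw [hA, strace_sub,
          strace_comp_even_odd _ _ (Lev01 a1) (Lev10 a1) (Lod00 b2) (Lod11 b2),
          strace_comp_odd_even _ _ (Lod00 b2) (Lod11 b2) (Lev01 a1) (Lev10 a1)]
        ring
      · have hz : ((mul (a1, (0:L₁)) ((0:L₀), b2) - mul (0, b2) (a1, 0)).1, (0 : L₁))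
            = (0 : L₀ × L₁) := by
          ext <;> simp [hg₀₁, hg₁₀]
        rw [hz, map_zero, strace_zero]
    · -- odd, even
      subst hx; subst hy
      rw [hstf, one_smul]
      constructor
      · have hA : mul (mul ((0:L₀), a2) (b1, 0) - mul (b1, 0) (0, a2))
            = mul ((0:L₀), a2) ∘ₗ mul (b1, (0:L₁)) - mul (b1, (0:L₁)) ∘ₗ mul (0, a2) := by
          refine LinearMap.ext fun w => ?_
          have h := hlsa (0, a2) (b1, 0) true false (by simp [SuperHom])
            (by simp [SuperHom]) w
          rw [hstf, one_smul] at h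
          simp only [map_sub, LinearMap.sub_apply, LinearMap.comp_apply]
          linear_combination (norm := abel) h
        rw [hA, strace_sub,
          strace_comp_odd_even _ _ (Lod00 a2) (Lod11 a2) (Lev01 b1) (Lev10 b1),
          strace_comp_even_odd _ _ (Lev01 b1) (Lev10 b1) (Lod00 a2) (Lod11 a2)]
        ring
      · have hz : ((mul ((0:L₀), a2) (b1, 0) - mul (b1, 0) (0, a2)).1, (0 : L₁))
            = (0 : L₀ × L₁) := by
          ext <;> simp [hg₀₁, hg₁₀]
        rw [hz, map_zero, strace_zero]
    · -- odd, odd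
      subst hx; subst hy
      rw [hstt]
      rw [show (mul ((0:L₀), a2) ((0:L₀), b2) - (-1 : K) • mul ((0:L₀), b2) ((0:L₀), a2))
          = mul ((0:L₀), a2) ((0:L₀), b2) + mul ((0:L₀), b2) ((0:L₀), a2) by
        rw [neg_smul, one_smul, sub_neg_eq_add]]
      constructor
      · have hA : mul (mul ((0:L₀), a2) ((0:L₀), b2) + mul ((0:L₀), b2) ((0:L₀), a2))
            = mul ((0:L₀), a2) ∘ₗ mul ((0:L₀), b2)
              + mul ((0:L₀), b2) ∘ₗ mul ((0:L₀), a2) := by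
          refine LinearMap.ext fun w => ?_
          have h := hlsa (0, a2) (0, b2) true true (by simp [SuperHom])
            (by simp [SuperHom]) w
          rw [hstt, neg_smul, one_smul] at h
          simp only [map_add, LinearMap.add_apply, LinearMap.comp_apply]
          linear_combination (norm := abel) h
        rw [hA, strace_add]
        exact strace_anticomm_odd _ _ (Lod00 a2) (Lod11 a2) (Lod00 b2) (Lod11 b2)
      · have hz : ((mul ((0:L₀), a2) ((0:L₀), b2) + mul ((0:L₀), b2) ((0:L₀), a2)).1, (0 : L₁))
            = mul ((0:L₀), a2) ((0:L₀), b2) + mul ((0:L₀), b2) ((0:L₀), a2) := by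
          ext <;> simp [hg₁₁]
        rw [hz]
        have hB : mul.flip (mul ((0:L₀), a2) ((0:L₀), b2) + mul ((0:L₀), b2) ((0:L₀), a2))
            = (mul.flip ((0:L₀), b2) ∘ₗ mul.flip ((0:L₀), a2)
                + mul.flip ((0:L₀), a2) ∘ₗ mul.flip ((0:L₀), b2))
              - ((mul.flip ((0:L₀), b2) ∘ₗ mul ((0:L₀), a2)
                    - mul ((0:L₀), a2) ∘ₗ mul.flip ((0:L₀), b2))
                  + (mul.flip ((0:L₀), a2) ∘ₗ mul ((0:L₀), b2)
                    - mul ((0:L₀), b2) ∘ₗ mul.flip ((0:L₀), a2))) ∘ₗ sgnOp := by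
          refine LinearMap.ext fun pt => ?_
          obtain ⟨p0, p1⟩ := pt
          have h0x := hlsa (p0, 0) (0, a2) false true (by simp [SuperHom])
            (by simp [SuperHom]) ((0:L₀), b2)
          have h1x := hlsa (0, p1) (0, a2) true true (by simp [SuperHom])
            (by simp [SuperHom]) ((0:L₀), b2)
          have h0y := hlsa (p0, 0) (0, b2) false true (by simp [SuperHom])
            (by simp [SuperHom]) ((0:L₀), a2)
          have h1y := hlsa (0, p1) (0, b2) true true (by simp [SuperHom])
            (by simp [SuperHom]) ((0:L₀), a2)
          rw [hsft, one_smul] at h0x h0y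
          rw [hstt, neg_smul, one_smul] at h1x h1y
          simp only [LinearMap.flip_apply, map_add, map_sub, LinearMap.add_apply,
            LinearMap.sub_apply, LinearMap.comp_apply, sgnOp_apply]
          rw [show ((p0, -p1) : L₀ × L₁) = (p0, (0:L₁)) - ((0:L₀), p1) by ext <;> simp]
          rw [show ((p0, p1) : L₀ × L₁) = (p0, (0:L₁)) + ((0:L₀), p1) by ext <;> simp]
          simp only [map_add, map_sub, LinearMap.add_apply, LinearMap.sub_apply]
          linear_combination (norm := abel) -h0x - h1x - h0y - h1y
        rw [hB, strace_sub, strace_add, strace_comp_sgnOp]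
        have t1 := trsum_comm_odd (mul.flip ((0:L₀), b2)) (mul ((0:L₀), a2))
          (Rod00 b2) (Rod11 b2) (Lod00 a2) (Lod11 a2)
        have t2 := trsum_comm_odd (mul.flip ((0:L₀), a2)) (mul ((0:L₀), b2))
          (Rod00 a2) (Rod11 a2) (Lod00 b2) (Lod11 b2)
        have t3 := strace_anticomm_odd (mul.flip ((0:L₀), b2)) (mul.flip ((0:L₀), a2))
          (Rod00 b2) (Rod11 b2) (Rod00 a2) (Rod11 a2)
        rw [sblk00_add, sblk11_add, map_add, map_add]
        linear_combination t3 - t1 - t2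
  -- extend to all elements by linearity
  have main : ∀ w : L₀ × L₁,
      strace (mul w) = 0 ∧ strace (mul.flip (w.1, (0 : L₁))) = 0 := by
    intro w
    have hw : w ∈ Submodule.span K {z : L₀ × L₁ | ∃ (x y : L₀ × L₁) (εx εy : Bool),
        SuperHom x εx ∧ SuperHom y εy ∧
        z = mul x y - superSign K εx εy • mul y x} := by
      rw [hgen]; exact Submodule.mem_top
    refine Submodule.span_induction (fun z hz => gen z hz) ?_ ?_ ?_ hw
    · constructor
      · rw [map_zero, strace_zero]
      · rw [show (((0 : L₀ × L₁).1, (0:L₁)) : L₀ × L₁) = 0 by ext <;> simp,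
          map_zero, strace_zero]
    · rintro u v _ _ ⟨hu1, hu2⟩ ⟨hv1, hv2⟩
      constructor
      · rw [map_add, strace_add, hu1, hv1, add_zero]
      · rw [show (((u + v).1, (0:L₁)) : L₀ × L₁) = (u.1, 0) + (v.1, 0) by ext <;> simp,
          map_add, strace_add, hu2, hv2, add_zero]
    · rintro c u _ ⟨hu1, hu2⟩
      constructor
      · rw [map_smul, strace_smul, hu1, mul_zero]
      · rw [show (((c • u).1, (0:L₁)) : L₀ × L₁) = c • ((u.1, 0) : L₀ × L₁) by
            ext <;> simp, map_smul, strace_smul, hu2, mul_zero]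
  -- endgame
  have hpq : (p : K) - q = 0 := by
    rcases he with ⟨e, heρ⟩ | ⟨e, heγ⟩
    · have h1 := (main e).1
      rw [show mul e = LinearMap.id from LinearMap.ext fun w => heρ w, strace_id,
        hp, hq] at h1
      exact h1
    · have h2 := (main e).2
      have hb0 : sblk00 (mul.flip ((e.1 : L₀), (0 : L₁))) = LinearMap.id := by
        ext w
        have h := congrArg Prod.fst (heγ ((w, (0 : L₁)) : L₀ × L₁))
        simp only [Prod.fst_sub, Prod.fst_add] at h
        simp only [show (((w, (0:L₁)).1, (0:L₁)) : L₀ × L₁) = (w, 0) from rfl,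
          show (((0:L₀), (w, (0:L₁)).2) : L₀ × L₁) = 0 by ext <;> simp] at h
        rw [map_zero] at h
        simp only [LinearMap.zero_apply, Prod.fst_zero, sub_zero, hg₀₁] at h
        simpa using h
      have hb1 : sblk11 (mul.flip ((e.1 : L₀), (0 : L₁))) = LinearMap.id := by
        ext w
        have h := congrArg Prod.snd (heγ (((0 : L₀), w) : L₀ × L₁))
        simp only [Prod.snd_sub, Prod.snd_add] at h
        simp only [show ((((0:L₀), w).1, (0:L₁)) : L₀ × L₁) = 0 by ext <;> simp,
          show (((0:L₀), ((0:L₀), w).2) : L₀ × L₁) = (0, w) from rfl] at h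
        rw [map_zero] at h
        simp only [LinearMap.zero_apply, Prod.snd_zero, zero_add, hg₁₁] at h
        simpa using h
      rw [strace, hb0, hb1, LinearMap.trace_id, LinearMap.trace_id, hp, hq] at h2
      exact h2
  have : (p : K) = q := by rwa [sub_eq_zero] at hpq
  exact_mod_cast this
end
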